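/- Let q = 2^m with m odd, m ≥ 3, and let U be the group of (q+1)-st roots of unity in GF(q^2). For any five pairwise distinct elements u1,...,u5 of U, the second elementary symmetric polynomial σ_{5,2}(u1,...,u5) = Σ_{i<j} u_i u_j is nonzero. -/

import Mathlib

/-!
Write `q = 2 ^ m`. The Frobenius `x ↦ x ^ q` is additive and inverts the points of `U`, so
applying it to `σ₂ = 0` gives `σ₃ = σ₅ · σ₂(u⁻¹) = 0`: every `uᵢ` is a root of
`X⁵ + σ₁ X⁴ + σ₄ X + σ₅`. The Möbius map `u ↦ u / (u + u₅)` sends `U \ {u₅}` into the affine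
line `{v | v ^ q = v + 1}` and turns this quintic into a quartic `A v⁴ + B v + σ₅`. Any two of
its roots satisfy `A (v + v')³ = B` with `v + v' ∈ GF(q)`, where cubing is injective since
`3 ∤ q - 1` for odd `m`. Hence three roots `v₁, v₂, v₃` force `v₂ = v₃`, unless `A = B = 0`,
which would make `σ₅ = 0`.
-/

theorem pow_two_pow_succ_sub_one_eq_self {M : Type*} [MonoidWithZero M]
    [IsRightCancelMulZero M] {m : ℕ} {x : M} (hx : x ^ 2 ^ m = x) :
    x ^ (2 ^ (m + 1) - 1) = x := by
  rcases eq_or_ne x 0 with rfl | hx0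
  · exact zero_pow (by have := Nat.one_lt_two_pow (Nat.succ_ne_zero m); omega)
  · refine mul_right_cancel₀ hx0 ?_
    rw [← pow_succ, Nat.sub_add_cancel Nat.one_le_two_pow, pow_succ, pow_mul, hx, sq]

theorem eq_of_pow_three_eq_of_pow_two_pow_eq_self {M : Type*} [MonoidWithZero M]
    [IsRightCancelMulZero M] {m : ℕ} (hm : Odd m) {x y : M} (hx : x ^ 2 ^ m = x)
    (hy : y ^ 2 ^ m = y) (h : x ^ 3 = y ^ 3) : x = y := by
  obtain ⟨s, hs⟩ : 3 ∣ 2 ^ (m + 1) - 1 :=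
    Nat.pow_sub_one_dvd_pow_sub_one 2 (even_iff_two_dvd.mp hm.add_one)
  rw [← pow_two_pow_succ_sub_one_eq_self hx, ← pow_two_pow_succ_sub_one_eq_self hy, hs,
    pow_mul, pow_mul, h]

theorem charP_two_of_card_eq_two_pow {F : Type*} [Field F] [Fintype F] {n : ℕ} (hn : n ≠ 0)
    (hF : Fintype.card F = 2 ^ n) : CharP F 2 :=
  ringChar.of_eq <| FiniteField.even_card_iff_char_two.mpr <| by
    rw [hF, ← Nat.even_iff]
    exact (Nat.even_pow' hn).mpr even_two

theorem pow_eq_inv_of_pow_succ_eq_one {M : Type*} [DivisionMonoid M] {n : ℕ} {u : M}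
    (hu : u ^ (n + 1) = 1) : u ^ n = u⁻¹ :=
  eq_inv_of_mul_eq_one_left (by rwa [← pow_succ])

theorem ne_zero_of_pow_succ_eq_one {M₀ : Type*} [MonoidWithZero M₀] [Nontrivial M₀] {n : ℕ}
    {u : M₀} (hu : u ^ (n + 1) = 1) : u ≠ 0 :=
  ne_zero_pow (Nat.succ_ne_zero _) (hu ▸ one_ne_zero)

theorem eq_of_div_add_eq_div_add {K : Type*} [Field K] {u u' w : K} (hw : w ≠ 0)
    (hu : u + w ≠ 0) (hu' : u' + w ≠ 0) (h : u / (u + w) = u' / (u' + w)) : u = u' := by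
  rw [div_eq_div_iff hu hu'] at h
  exact mul_right_cancel₀ hw (by linear_combination h)

section CharTwo

variable {F : Type*} [Field F] [CharP F 2] {m : ℕ}

theorem esymm_three_eq_zero_of_esymm_two_eq_zero {u₁ u₂ u₃ u₄ u₅ : F}
    (h₁ : u₁ ^ (2 ^ m + 1) = 1) (h₂ : u₂ ^ (2 ^ m + 1) = 1) (h₃ : u₃ ^ (2 ^ m + 1) = 1)
    (h₄ : u₄ ^ (2 ^ m + 1) = 1) (h₅ : u₅ ^ (2 ^ m + 1) = 1)
    (hσ₂ : u₁ * u₂ + u₁ * u₃ + u₁ * u₄ + u₁ * u₅ + u₂ * u₃ + u₂ * u₄ + u₂ * u₅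
      + u₃ * u₄ + u₃ * u₅ + u₄ * u₅ = 0) :
    u₁ * u₂ * u₃ + u₁ * u₂ * u₄ + u₁ * u₂ * u₅ + u₁ * u₃ * u₄ + u₁ * u₃ * u₅ + u₁ * u₄ * u₅
      + u₂ * u₃ * u₄ + u₂ * u₃ * u₅ + u₂ * u₄ * u₅ + u₃ * u₄ * u₅ = 0 := by
  have hfrob := congrArg (· ^ 2 ^ m) hσ₂
  simp only [add_pow_char_pow, mul_pow, pow_eq_inv_of_pow_succ_eq_one h₁,
    pow_eq_inv_of_pow_succ_eq_one h₂, pow_eq_inv_of_pow_succ_eq_one h₃,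
    pow_eq_inv_of_pow_succ_eq_one h₄, pow_eq_inv_of_pow_succ_eq_one h₅,
    zero_pow (pow_ne_zero m two_ne_zero)] at hfrob
  field_simp [ne_zero_of_pow_succ_eq_one h₁, ne_zero_of_pow_succ_eq_one h₂,
    ne_zero_of_pow_succ_eq_one h₃, ne_zero_of_pow_succ_eq_one h₄,
    ne_zero_of_pow_succ_eq_one h₅] at hfrob
  linear_combination hfrob

theorem pow_five_add_eq_zero_of_esymm_eq_zero {u₁ u₂ u₃ u₄ u₅ x : F}
    (hσ₂ : u₁ * u₂ + u₁ * u₃ + u₁ * u₄ + u₁ * u₅ + u₂ * u₃ + u₂ * u₄ + u₂ * u₅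
      + u₃ * u₄ + u₃ * u₅ + u₄ * u₅ = 0)
    (hσ₃ : u₁ * u₂ * u₃ + u₁ * u₂ * u₄ + u₁ * u₂ * u₅ + u₁ * u₃ * u₄ + u₁ * u₃ * u₅
      + u₁ * u₄ * u₅ + u₂ * u₃ * u₄ + u₂ * u₃ * u₅ + u₂ * u₄ * u₅ + u₃ * u₄ * u₅ = 0)
    (hx : x = u₁ ∨ x = u₂ ∨ x = u₃ ∨ x = u₄ ∨ x = u₅) :
    x ^ 5 + (u₁ + u₂ + u₃ + u₄ + u₅) * x ^ 4
      + (u₁ * u₂ * u₃ * u₄ + u₁ * u₂ * u₃ * u₅ + u₁ * u₂ * u₄ * u₅ + u₁ * u₃ * u₄ * u₅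
        + u₂ * u₃ * u₄ * u₅) * x + u₁ * u₂ * u₃ * u₄ * u₅ = 0 := by
  have hprod : (x + u₁) * (x + u₂) * (x + u₃) * (x + u₄) * (x + u₅) = 0 := by
    rcases hx with rfl | rfl | rfl | rfl | rfl <;> simp [CharTwo.add_self_eq_zero]
  linear_combination hprod - x ^ 3 * hσ₂ - x ^ 2 * hσ₃

theorem div_add_pow_two_pow {u w : F} (hu : u ^ (2 ^ m + 1) = 1) (hw : w ^ (2 ^ m + 1) = 1)
    (huw : u ≠ w) : (u / (u + w)) ^ 2 ^ m = u / (u + w) + 1 := by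
  have hu0 := ne_zero_of_pow_succ_eq_one hu
  have hw0 := ne_zero_of_pow_succ_eq_one hw
  have huw' : u + w ≠ 0 := fun h => huw (CharTwo.add_eq_zero.mp h)
  have hwu' : w + u ≠ 0 := fun h => huw (CharTwo.add_eq_zero.mp h).symm
  rw [div_pow, add_pow_char_pow, pow_eq_inv_of_pow_succ_eq_one hu,
    pow_eq_inv_of_pow_succ_eq_one hw]
  field_simp
  ring_nf
  simp [CharTwo.ofNat_eq_mod]

theorem add_pow_two_pow_eq_self {x y : F} (hx : x ^ 2 ^ m = x + 1) (hy : y ^ 2 ^ m = y + 1) :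
    (x + y) ^ 2 ^ m = x + y := by
  rw [add_pow_char_pow, hx, hy, add_add_add_comm, CharTwo.add_self_eq_zero, add_zero]

theorem quartic_root_div_add {a b c u w : F}
    (hu : u ^ 5 + a * u ^ 4 + b * u + c = 0) (hw : w ^ 5 + a * w ^ 4 + b * w + c = 0)
    (huw : u ≠ w) :
    (a * w ^ 4 + c) * (u / (u + w)) ^ 4 + (b * w + c) * (u / (u + w)) + c = 0 := by
  set v := u / (u + w)
  have huv : u * (1 + v) = v * w := by
    have huw' : u + w ≠ 0 := fun h => huw (CharTwo.add_eq_zero.mp h)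
    simp only [v]
    field_simp
    ring_nf
    simp [CharTwo.ofNat_eq_mod]
  -- `(1 + v)⁵ (u⁵ + a u⁴ + b u + c) = X⁵ + a (1 + v) X⁴ + b (1 + v)⁴ X + c (1 + v)⁵`
  -- with `X = u (1 + v) = v w`.
  linear_combination (norm := ring_nf) (1 + v) ^ 5 * hu - v ^ 5 * hw
    - ((u * (1 + v)) ^ 4 + (u * (1 + v)) ^ 3 * (v * w) + (u * (1 + v)) ^ 2 * (v * w) ^ 2
      + u * (1 + v) * (v * w) ^ 3 + (v * w) ^ 4
      + a * (1 + v) * ((u * (1 + v)) ^ 3 + (u * (1 + v)) ^ 2 * (v * w)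
        + u * (1 + v) * (v * w) ^ 2 + (v * w) ^ 3)
      + b * (1 + v) ^ 4) * huv
  simp [CharTwo.ofNat_eq_mod]

theorem mul_add_pow_three_eq {A B C x y : F} (hx : A * x ^ 4 + B * x + C = 0)
    (hy : A * y ^ 4 + B * y + C = 0) (hxy : x ≠ y) : A * (x + y) ^ 3 = B := by
  have hxy' : x + y ≠ 0 := fun h => hxy (CharTwo.add_eq_zero.mp h)
  refine mul_left_cancel₀ hxy' ?_
  linear_combination (norm := ring_nf) hx + hy
  simp [CharTwo.ofNat_eq_mod]

theorem false_of_three_roots (hm : Odd m) {A B C x y z : F} (hC : C ≠ 0)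
    (hx : x ^ 2 ^ m = x + 1) (hy : y ^ 2 ^ m = y + 1) (hz : z ^ 2 ^ m = z + 1)
    (hxy : x ≠ y) (hxz : x ≠ z) (hyz : y ≠ z) (hrx : A * x ^ 4 + B * x + C = 0)
    (hry : A * y ^ 4 + B * y + C = 0) (hrz : A * z ^ 4 + B * z + C = 0) : False := by
  have hxy3 := mul_add_pow_three_eq hrx hry hxy
  have hxz3 := mul_add_pow_three_eq hrx hrz hxz
  by_cases hA : A = 0
  · have hB : B = 0 := by rw [← hxy3, hA, zero_mul]
    exact hC (by simpa [hA, hB] using hrx)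
  · refine hyz (add_left_cancel (eq_of_pow_three_eq_of_pow_two_pow_eq_self hm
      (add_pow_two_pow_eq_self hx hy) (add_pow_two_pow_eq_self hx hz) ?_))
    exact mul_left_cancel₀ hA (hxy3.trans hxz3.symm)

theorem false_of_four_roots_on_circle (hm : Odd m) {a b c w u₁ u₂ u₃ : F} (hc : c ≠ 0)
    (hw : w ^ (2 ^ m + 1) = 1) (hu₁ : u₁ ^ (2 ^ m + 1) = 1) (hu₂ : u₂ ^ (2 ^ m + 1) = 1)
    (hu₃ : u₃ ^ (2 ^ m + 1) = 1) (h₁ : u₁ ≠ w) (h₂ : u₂ ≠ w) (h₃ : u₃ ≠ w)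
    (h₁₂ : u₁ ≠ u₂) (h₁₃ : u₁ ≠ u₃) (h₂₃ : u₂ ≠ u₃)
    (hrw : w ^ 5 + a * w ^ 4 + b * w + c = 0)
    (hr₁ : u₁ ^ 5 + a * u₁ ^ 4 + b * u₁ + c = 0)
    (hr₂ : u₂ ^ 5 + a * u₂ ^ 4 + b * u₂ + c = 0)
    (hr₃ : u₃ ^ 5 + a * u₃ ^ 4 + b * u₃ + c = 0) : False := by
  have hne : ∀ {u u' : F}, u ≠ w → u' ≠ w → u ≠ u' → u / (u + w) ≠ u' / (u' + w) :=
    fun hu hu' huu' h => huu' <| eq_of_div_add_eq_div_add (ne_zero_of_pow_succ_eq_one hw)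
      (fun h => hu (CharTwo.add_eq_zero.mp h)) (fun h => hu' (CharTwo.add_eq_zero.mp h)) h
  exact false_of_three_roots hm hc
    (div_add_pow_two_pow hu₁ hw h₁) (div_add_pow_two_pow hu₂ hw h₂)
    (div_add_pow_two_pow hu₃ hw h₃) (hne h₁ h₂ h₁₂) (hne h₁ h₃ h₁₃) (hne h₂ h₃ h₂₃)
    (quartic_root_div_add hr₁ hrw h₁) (quartic_root_div_add hr₂ hrw h₂)
    (quartic_root_div_add hr₃ hrw h₃)

end CharTwo

theorem stmt_8_general (m : ℕ) (hmo : Odd m) (F : Type*) [Field F] [Fintype F]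
    (hF : Fintype.card F = 2 ^ (2 * m))
    (u1 u2 u3 u4 u5 : F)
    (h1 : u1 ^ (2 ^ m + 1) = 1) (h2 : u2 ^ (2 ^ m + 1) = 1)
    (h3 : u3 ^ (2 ^ m + 1) = 1) (h4 : u4 ^ (2 ^ m + 1) = 1)
    (h5 : u5 ^ (2 ^ m + 1) = 1)
    (h12 : u1 ≠ u2) (h13 : u1 ≠ u3) (h15 : u1 ≠ u5)
    (h23 : u2 ≠ u3) (h25 : u2 ≠ u5)
    (h35 : u3 ≠ u5) :
    u1 * u2 + u1 * u3 + u1 * u4 + u1 * u5 + u2 * u3 + u2 * u4 + u2 * u5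
      + u3 * u4 + u3 * u5 + u4 * u5 ≠ 0 := by
  intro hσ₂
  have : CharP F 2 := charP_two_of_card_eq_two_pow (by have := hmo.pos; omega) hF
  have hσ₃ := esymm_three_eq_zero_of_esymm_two_eq_zero h1 h2 h3 h4 h5 hσ₂
  have hroot := fun x hx => pow_five_add_eq_zero_of_esymm_eq_zero (x := x) hσ₂ hσ₃ hx
  refine false_of_four_roots_on_circle hmo ?_ h5 h1 h2 h3 h15 h25 h35 h12 h13 h23
    (hroot u5 (by simp)) (hroot u1 (by simp)) (hroot u2 (by simp)) (hroot u3 (by simp))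
  simp [ne_zero_of_pow_succ_eq_one h1, ne_zero_of_pow_succ_eq_one h2,
    ne_zero_of_pow_succ_eq_one h3, ne_zero_of_pow_succ_eq_one h4,
    ne_zero_of_pow_succ_eq_one h5]

/-- For `q = 2^m` with `m` odd, `m ≥ 3`, and five pairwise distinct `(q+1)`-st roots
of unity in `GF(q^2)`, the elementary symmetric polynomial `σ_{5,2}` is nonzero. -/
theorem stmt_8 (m : ℕ) (hm : 3 ≤ m) (hmo : Odd m) (F : Type*) [Field F] [Fintype F]
    (hF : Fintype.card F = 2 ^ (2 * m))
    (u1 u2 u3 u4 u5 : F)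
    (h1 : u1 ^ (2 ^ m + 1) = 1) (h2 : u2 ^ (2 ^ m + 1) = 1)
    (h3 : u3 ^ (2 ^ m + 1) = 1) (h4 : u4 ^ (2 ^ m + 1) = 1)
    (h5 : u5 ^ (2 ^ m + 1) = 1)
    (h12 : u1 ≠ u2) (h13 : u1 ≠ u3) (h14 : u1 ≠ u4) (h15 : u1 ≠ u5)
    (h23 : u2 ≠ u3) (h24 : u2 ≠ u4) (h25 : u2 ≠ u5)
    (h34 : u3 ≠ u4) (h35 : u3 ≠ u5) (h45 : u4 ≠ u5) :
    u1 * u2 + u1 * u3 + u1 * u4 + u1 * u5 + u2 * u3 + u2 * u4 + u2 * u5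
      + u3 * u4 + u3 * u5 + u4 * u5 ≠ 0 :=
  stmt_8_general m hmo F hF u1 u2 u3 u4 u5 h1 h2 h3 h4 h5 h12 h13 h15 h23 h25 h35
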